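/- arXiv:2203.07368 — 6 statements merged into one kernel-verified Lean document; each statement's English description precedes it below -/
import Mathlib

section
/- For every integer H ≥ 1, every integer t ≥ 1, and every real a with 1/2 ≤ a ≤ 1, the rescaled learning rates satisfy 1/t^a ≤ ∑_{i=1}^{t} η_i^t / i^a ≤ 2/t^a. -/
/-!
The weights `η_i^t` (`1 ≤ i ≤ t`) are nonnegative, sum to `1`, and satisfy
`η_i^{t+1} = (1 - η_{t+1}) η_i^t` for `i ≤ t`, so `S_t = ∑_i η_i^t / i^a` obeys
`S_{t+1} = (1 - η_{t+1}) S_t + η_{t+1} / (t+1)^a`. The lower bound holds because `S_t` is an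
average of values `1/i^a ≥ 1/t^a`. The upper bound follows by induction: since
`1 - η_{t+1} = t/(H+t+1)` and `t^{1-a} ≤ (t+1)^{1-a}`, the recursion maps `2/t^a` to at most
`(2(t+1) + H + 1) / ((H+t+1)(t+1)^a) ≤ 2/(t+1)^a`, using `H ≥ 1`.
-/

/-- The learning rate `η_j = (H+1)/(H+j)`. -/
noncomputable def eta (H j : ℕ) : ℝ := ((H : ℝ) + 1) / ((H : ℝ) + j)

/-- The rescaled learning rate `η_i^t`:  `η_i^t = η_i ∏_{j=i+1}^t (1 - η_j)` for `1 ≤ i ≤ t`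
(so `η_i^i = η_i`), `η_i^t = 0` for `t < i`, and `η_0^t = ∏_{j=1}^t (1 - η_j)`. -/
noncomputable def etaStep (H i t : ℕ) : ℝ :=
  if i = 0 then ∏ j ∈ Finset.Icc 1 t, (1 - eta H j)
  else if i ≤ t then eta H i * ∏ j ∈ Finset.Icc (i + 1) t, (1 - eta H j)
  else 0

open Finset

lemma eta_one (H : ℕ) : eta H 1 = 1 := by
  rw [eta, Nat.cast_one, div_self (by positivity)]

lemma eta_le_one (H : ℕ) {j : ℕ} (hj : 1 ≤ j) : eta H j ≤ 1 := by
  have hj' : (1 : ℝ) ≤ j := by exact_mod_cast hj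
  rw [eta, div_le_one (by positivity)]
  linarith

lemma one_sub_eta_succ (H t : ℕ) : 1 - eta H (t + 1) = t / (H + t + 1) := by
  rw [eta, Nat.cast_succ, ← add_assoc, one_sub_div (by positivity)]
  ring_nf

lemma etaStep_nonneg (H : ℕ) {i : ℕ} (hi : 1 ≤ i) (t : ℕ) : 0 ≤ etaStep H i t := by
  unfold etaStep
  rw [if_neg (by omega)]
  split_ifs
  · refine mul_nonneg (by unfold eta; positivity) (prod_nonneg fun j hj => ?_)
    exact sub_nonneg.mpr (eta_le_one H (by have := (mem_Icc.mp hj).1; omega))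
  · exact le_rfl

lemma etaStep_self (H : ℕ) {t : ℕ} (ht : 1 ≤ t) : etaStep H t t = eta H t := by
  rw [etaStep, if_neg (by omega), if_pos le_rfl, Icc_eq_empty (by omega), prod_empty, mul_one]

lemma etaStep_succ (H : ℕ) {i t : ℕ} (hi : 1 ≤ i) (hit : i ≤ t) :
    etaStep H i (t + 1) = (1 - eta H (t + 1)) * etaStep H i t := by
  unfold etaStep
  rw [if_neg (show i ≠ 0 by omega), if_neg (show i ≠ 0 by omega),
    if_pos (show i ≤ t + 1 by omega), if_pos hit, prod_Icc_succ_top (by omega)]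
  ring

lemma sum_etaStep_mul_succ (H t : ℕ) (f : ℕ → ℝ) :
    ∑ i ∈ Icc 1 (t + 1), etaStep H i (t + 1) * f i
      = (1 - eta H (t + 1)) * ∑ i ∈ Icc 1 t, etaStep H i t * f i
        + eta H (t + 1) * f (t + 1) := by
  rw [sum_Icc_succ_top (by omega), etaStep_self H (by omega), mul_sum]
  congr 1
  refine sum_congr rfl fun i hi => ?_
  rw [etaStep_succ H (mem_Icc.mp hi).1 (mem_Icc.mp hi).2, mul_assoc]

lemma sum_etaStep (H : ℕ) {t : ℕ} (ht : 1 ≤ t) : ∑ i ∈ Icc 1 t, etaStep H i t = 1 := by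
  induction t, ht using Nat.le_induction with
  | base => rw [Icc_self, sum_singleton, etaStep_self H le_rfl, eta_one]
  | succ t _ ih =>
    simpa only [mul_one, ih, sub_add_cancel] using sum_etaStep_mul_succ H t fun _ => 1

lemma one_div_rpow_le_sum_etaStep_div_rpow (H : ℕ) {t : ℕ} (ht : 1 ≤ t) {a : ℝ} (ha : 0 ≤ a) :
    1 / (t : ℝ) ^ a ≤ ∑ i ∈ Icc 1 t, etaStep H i t / (i : ℝ) ^ a := by
  calc 1 / (t : ℝ) ^ a = ∑ i ∈ Icc 1 t, etaStep H i t / (t : ℝ) ^ a := by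
        rw [← sum_div, sum_etaStep H ht]
    _ ≤ ∑ i ∈ Icc 1 t, etaStep H i t / (i : ℝ) ^ a := by
        refine sum_le_sum fun i hi => ?_
        have hi1 : (1 : ℝ) ≤ i := by exact_mod_cast (mem_Icc.mp hi).1
        have hit : (i : ℝ) ≤ t := by exact_mod_cast (mem_Icc.mp hi).2
        exact div_le_div_of_nonneg_left (etaStep_nonneg H (mem_Icc.mp hi).1 t)
          (by positivity) (Real.rpow_le_rpow (by linarith) hit ha)

lemma div_rpow_le_succ_div_rpow {x a : ℝ} (hx : 0 < x) (ha : a ≤ 1) :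
    x / x ^ a ≤ (x + 1) / (x + 1) ^ a := by
  have hmono : x ^ (1 - a) ≤ (x + 1) ^ (1 - a) :=
    Real.rpow_le_rpow hx.le (by linarith) (by linarith)
  rwa [Real.rpow_sub hx, Real.rpow_sub (by linarith), Real.rpow_one, Real.rpow_one] at hmono

lemma two_div_rpow_step (H : ℕ) (hH : 1 ≤ H) {t : ℕ} (ht : 1 ≤ t) {a : ℝ} (ha : a ≤ 1) :
    (1 - eta H (t + 1)) * (2 / (t : ℝ) ^ a) + eta H (t + 1) * (1 / ((t + 1 : ℕ) : ℝ) ^ a)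
      ≤ 2 / ((t + 1 : ℕ) : ℝ) ^ a := by
  have hH' : (1 : ℝ) ≤ H := by exact_mod_cast hH
  have ht' : (0 : ℝ) < t := by exact_mod_cast ht
  have hmono := div_rpow_le_succ_div_rpow ht' ha
  have hy : 0 ≤ 1 / ((t : ℝ) + 1) ^ a := by positivity
  rw [← mul_one_div (_ + 1 : ℝ)] at hmono
  rw [one_sub_eta_succ, eta, Nat.cast_succ, ← add_assoc]
  calc (t : ℝ) / (H + t + 1) * (2 / (t : ℝ) ^ a) + (H + 1) / (H + t + 1) * (1 / (t + 1) ^ a)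
      = (2 * (t / (t : ℝ) ^ a) + (H + 1) * (1 / (t + 1) ^ a)) / (H + t + 1) := by ring
    _ ≤ (2 * (H + t + 1) * (1 / (t + 1) ^ a)) / (H + t + 1) := by gcongr; nlinarith
    _ = 2 / ((t : ℝ) + 1) ^ a := by field_simp

lemma sum_etaStep_div_rpow_le (H : ℕ) (hH : 1 ≤ H) {t : ℕ} (ht : 1 ≤ t) {a : ℝ} (ha : a ≤ 1) :
    ∑ i ∈ Icc 1 t, etaStep H i t / (i : ℝ) ^ a ≤ 2 / (t : ℝ) ^ a := by
  simp only [← mul_one_div (etaStep H _ t)]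
  induction t, ht using Nat.le_induction with
  | base => norm_num [etaStep_self H le_rfl, eta_one]
  | succ t ht ih =>
    rw [sum_etaStep_mul_succ]
    calc _ ≤ (1 - eta H (t + 1)) * (2 / (t : ℝ) ^ a)
          + eta H (t + 1) * (1 / ((t + 1 : ℕ) : ℝ) ^ a) := by
          gcongr
          rw [sub_nonneg]
          exact eta_le_one H (by omega)
      _ ≤ _ := two_div_rpow_step H hH ht ha

/-- For every integer `H ≥ 1`, every integer `t ≥ 1`, and every real `a` with `1/2 ≤ a ≤ 1`,
the rescaled learning rates satisfy `1/t^a ≤ ∑_{i=1}^t η_i^t / i^a ≤ 2/t^a`. -/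
theorem stmt1 (H t : ℕ) (hH : 1 ≤ H) (ht : 1 ≤ t) (a : ℝ) (ha1 : 1 / 2 ≤ a) (ha2 : a ≤ 1) :
    1 / (t : ℝ) ^ a ≤ (∑ i ∈ Finset.Icc 1 t, etaStep H i t / (i : ℝ) ^ a) ∧
    (∑ i ∈ Finset.Icc 1 t, etaStep H i t / (i : ℝ) ^ a) ≤ 2 / (t : ℝ) ^ a :=
  ⟨one_div_rpow_le_sum_etaStep_div_rpow H ht (by linarith),
    sum_etaStep_div_rpow_le H hH ht ha2⟩
end

section
/- There exists an absolute constant C > 0 with the following property. For all positive integers S and T, every δ ∈ (0,1) with ST ≥ e·δ, every γ ∈ (0,1), setting H := ⌈(4/(1−γ)) log(ST/δ)⌉, for every S×S row-stochastic matrix P, every probability row vector ρ ∈ ℝ^S, and every entrywise nonnegative vector V ∈ ℝ^S, the series ∑_{j=0}^{∞} [γ(1+1/H)³]^j ⟨ρP^j, V⟩ converges and is at most C·( ⟨d, V⟩/(1−γ) + δ‖V‖_∞/(S T⁴ (1−γ)) ), where d := (1−γ) ∑_{t=0}^{∞} γ^t ρP^t. -/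
/-!
Write `g j = ⟨ρ P^j, V⟩ ∈ [0, ‖V‖_∞]`, so that `⟨d, V⟩ = (1 - γ) ∑ γ^j g j`, and split the inflated
series at `N = 4H`. On the first `N` terms the inflation `(1 + 1/H)^(3j)` is at most `e^12`. Since
`1/H ≤ (1 - γ)/4`, the inflated discount `β = γ (1 + 1/H)^3` is at most `e^{-(1-γ)/4}`, so
`β^N ≤ e^{-(1-γ)H} ≤ (δ / ST)^4` and `1 - β ≥ 3(1 - γ)/16`; the geometric tail beyond `N` is
therefore at most `(16/3) (δ / ST)^4 ‖V‖_∞ / (1 - γ)`.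
-/

open Matrix Finset Real

namespace Matrix

variable {R n : Type*} [Fintype n] [DecidableEq n] [Semiring R] [PartialOrder R]
  [IsOrderedRing R] {M : Matrix n n R} {p : n → R}

lemma vecMul_mem_stdSimplex (hM : M ∈ rowStochastic R n) (hp : p ∈ stdSimplex R n) :
    p ᵥ* M ∈ stdSimplex R n := by
  refine ⟨nonneg_vecMul_of_mem_rowStochastic hM hp.1, ?_⟩
  simpa [dotProduct_one] using
    vecMul_dotProduct_one_eq_one_rowStochastic hM (by simpa [dotProduct_one] using hp.2)

end Matrix

lemma dotProduct_le_iSup_abs {ι : Type*} [Fintype ι] {q : ι → ℝ} (hq : q ∈ stdSimplex ℝ ι)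
    (V : ι → ℝ) : q ⬝ᵥ V ≤ ⨆ i, |V i| :=
  calc q ⬝ᵥ V ≤ ∑ i, q i * ⨆ j, |V j| :=
        sum_le_sum fun i _ => mul_le_mul_of_nonneg_left
          ((le_abs_self _).trans (le_ciSup (Finite.bddAbove_range fun j => |V j|) i)) (hq.1 i)
    _ = ⨆ i, |V i| := by rw [← sum_mul, hq.2, one_mul]

lemma sum_mul_tsum_pow_mul {ι : Type*} [Fintype ι] {γ : ℝ} {p : ℕ → ι → ℝ}
    (hp : ∀ i, Summable fun t => γ ^ t * p t i) (c : ℝ) (V : ι → ℝ) :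
    ∑ i, (c * ∑' t, γ ^ t * p t i) * V i = c * ∑' t, γ ^ t * ∑ i, p t i * V i := by
  have hterm : ∀ i, (c * ∑' t, γ ^ t * p t i) * V i = c * ∑' t, γ ^ t * p t i * V i := by
    intro i; rw [mul_assoc, tsum_mul_right]
  rw [sum_congr rfl fun i _ => hterm i, ← mul_sum,
    ← Summable.tsum_finsetSum fun i _ => (hp i).mul_right (V i)]
  simp_rw [mul_sum, mul_assoc]

lemma summable_pow_mul_of_bounded {r W : ℝ} {g : ℕ → ℝ} (hr0 : 0 ≤ r) (hr1 : r < 1)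
    (hg0 : ∀ j, 0 ≤ g j) (hgW : ∀ j, g j ≤ W) : Summable fun j => r ^ j * g j :=
  ((summable_geometric_of_lt_one hr0 hr1).mul_right W).of_nonneg_of_le
    (fun j => mul_nonneg (pow_nonneg hr0 j) (hg0 j))
    (fun j => mul_le_mul_of_nonneg_left (hgW j) (pow_nonneg hr0 j))

lemma tsum_mul_pow_le_head_add_tail {r c W : ℝ} {g : ℕ → ℝ} (hg0 : ∀ j, 0 ≤ g j)
    (hgW : ∀ j, g j ≤ W) (hr : 0 ≤ r) (hc : 1 ≤ c) (hrc : r * c < 1) (N : ℕ) :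
    ∑' j, (r * c) ^ j * g j ≤ c ^ N * ∑' j, r ^ j * g j + (r * c) ^ N * W / (1 - r * c) := by
  have hrc0 : 0 ≤ r * c := mul_nonneg hr (zero_le_one.trans hc)
  have hr1 : r < 1 := (le_mul_of_one_le_right hr hc).trans_lt hrc
  have hsum := summable_pow_mul_of_bounded hrc0 hrc hg0 hgW
  have head : ∑ j ∈ range N, (r * c) ^ j * g j ≤ c ^ N * ∑' j, r ^ j * g j :=
    calc ∑ j ∈ range N, (r * c) ^ j * g j ≤ ∑ j ∈ range N, c ^ N * (r ^ j * g j) := by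
          refine sum_le_sum fun j hj => ?_
          rw [mul_pow, mul_comm (r ^ j), mul_assoc]
          have := hg0 j
          gcongr
          exact (mem_range.1 hj).le
      _ = c ^ N * ∑ j ∈ range N, r ^ j * g j := (mul_sum ..).symm
      _ ≤ c ^ N * ∑' j, r ^ j * g j := by
          gcongr
          exact (summable_pow_mul_of_bounded hr hr1 hg0 hgW).sum_le_tsum _
            fun j _ => mul_nonneg (pow_nonneg hr j) (hg0 j)
  have tail : ∑' j, (r * c) ^ (j + N) * g (j + N) ≤ (r * c) ^ N * W / (1 - r * c) :=
    calc ∑' j, (r * c) ^ (j + N) * g (j + N) ≤ ∑' j, (r * c) ^ N * W * (r * c) ^ j := by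
          refine ((summable_nat_add_iff N).2 hsum).tsum_le_tsum (fun j => ?_)
            ((summable_geometric_of_lt_one hrc0 hrc).mul_left _)
          rw [pow_add, mul_comm ((r * c) ^ N * W), mul_assoc]
          gcongr
          exact hgW _
      _ = (r * c) ^ N * W / (1 - r * c) := by
          rw [tsum_mul_left, tsum_geometric_of_lt_one hrc0 hrc, div_eq_mul_inv]
  rw [← hsum.sum_add_tsum_nat_add N]
  exact add_le_add head tail

lemma one_add_one_div_pow_le_exp (n k : ℕ) : (1 + 1 / (n : ℝ)) ^ (k * n) ≤ exp k :=
  calc (1 + 1 / (n : ℝ)) ^ (k * n) ≤ exp (1 / n) ^ (k * n) := by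
        gcongr
        linarith [add_one_le_exp (1 / (n : ℝ))]
    _ = exp (k * (n * (1 / n))) := by rw [← exp_nat_mul]; push_cast; ring_nf
    _ ≤ exp k := by
        gcongr
        rcases n.eq_zero_or_pos with rfl | hn
        · simp
        · rw [mul_one_div_cancel (by positivity), mul_one]

lemma mul_one_add_one_div_pow_three_le_exp {γ : ℝ} {H : ℕ} (hH : 4 ≤ (1 - γ) * H) :
    γ * (1 + 1 / (H : ℝ)) ^ 3 ≤ exp (-((1 - γ) / 4)) := by
  have hH0 : (0 : ℝ) < H := Nat.cast_pos.2 (Nat.pos_of_ne_zero (by rintro rfl; norm_num at hH))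
  have hinv : 1 / (H : ℝ) ≤ (1 - γ) / 4 := by
    rw [div_le_div_iff₀ hH0 (by norm_num)]; linarith
  calc γ * (1 + 1 / (H : ℝ)) ^ 3 ≤ exp (-(1 - γ)) * exp (1 / H) ^ 3 := by
        gcongr
        · linarith [add_one_le_exp (-(1 - γ))]
        · linarith [add_one_le_exp (1 / (H : ℝ))]
    _ = exp (-(1 - γ) + 3 * (1 / H)) := by rw [← exp_nat_mul, ← exp_add]; norm_num
    _ ≤ exp (-((1 - γ) / 4)) := by gcongr; linarith

lemma three_div_four_mul_le_one_sub_exp_neg {y : ℝ} (hy0 : 0 ≤ y) (hy1 : y ≤ 1 / 4) :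
    3 / 4 * y ≤ 1 - exp (-y) := by
  -- `(1 + y) e^{-y} ≤ 1` and `1 - y ≤ e^{-y}` give `1 - e^{-y} ≥ y e^{-y} ≥ y (1 - y)`.
  have h1 : (1 + y) * exp (-y) ≤ 1 := by
    calc (1 + y) * exp (-y) ≤ exp y * exp (-y) := by gcongr; linarith [add_one_le_exp y]
      _ = 1 := by rw [← exp_add, add_neg_cancel, exp_zero]
  have h2 : 1 - y ≤ exp (-y) := by linarith [add_one_le_exp (-y)]
  nlinarith

lemma tsum_inflated_discount_le {γ L W : ℝ} {H : ℕ} {g : ℕ → ℝ} (hg0 : ∀ j, 0 ≤ g j)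
    (hgW : ∀ j, g j ≤ W) (hγ0 : 0 ≤ γ) (hγ1 : γ < 1) (hL : 1 ≤ L) (hH : 4 / (1 - γ) * L ≤ H) :
    Summable (fun j => (γ * (1 + 1 / (H : ℝ)) ^ 3) ^ j * g j) ∧
      ∑' j, (γ * (1 + 1 / (H : ℝ)) ^ 3) ^ j * g j ≤
        exp 12 * ∑' j, γ ^ j * g j + 16 / 3 * exp (-(4 * L)) * W / (1 - γ) := by
  have hH' : 4 * L ≤ (1 - γ) * H := by rwa [div_mul_eq_mul_div, div_le_iff₀' (by linarith)] at hH
  set c : ℝ := (1 + 1 / (H : ℝ)) ^ 3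
  have hc : 1 ≤ c := one_le_pow₀ (by simp)
  have hβ : γ * c ≤ exp (-((1 - γ) / 4)) := mul_one_add_one_div_pow_three_le_exp (by linarith)
  have hgap : 3 / 16 * (1 - γ) ≤ 1 - γ * c := by
    linarith [three_div_four_mul_le_one_sub_exp_neg (y := (1 - γ) / 4) (by linarith)
      (by linarith)]
  have hβ1 : γ * c < 1 := by linarith
  have hβ0 : 0 ≤ γ * c := mul_nonneg hγ0 (zero_le_one.trans hc)
  have hW : 0 ≤ W := (hg0 0).trans (hgW 0)
  refine ⟨summable_pow_mul_of_bounded hβ0 hβ1 hg0 hgW,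
    (tsum_mul_pow_le_head_add_tail hg0 hgW hγ0 hc hβ1 (4 * H)).trans ?_⟩
  have hhead : c ^ (4 * H) ≤ exp 12 := by
    rw [← pow_mul, ← mul_assoc]
    exact_mod_cast one_add_one_div_pow_le_exp H 12
  have htail : (γ * c) ^ (4 * H) ≤ exp (-(4 * L)) :=
    calc (γ * c) ^ (4 * H) ≤ exp (-((1 - γ) / 4)) ^ (4 * H) := by gcongr
      _ = exp (-((1 - γ) * H)) := by rw [← exp_nat_mul]; push_cast; ring_nf
      _ ≤ exp (-(4 * L)) := by gcongr
  have hsum0 : 0 ≤ ∑' j, γ ^ j * g j := tsum_nonneg fun j => mul_nonneg (pow_nonneg hγ0 j) (hg0 j)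
  calc c ^ (4 * H) * ∑' j, γ ^ j * g j + (γ * c) ^ (4 * H) * W / (1 - γ * c)
      ≤ exp 12 * ∑' j, γ ^ j * g j + exp (-(4 * L)) * W / (3 / 16 * (1 - γ)) := by
        gcongr
    _ = exp 12 * ∑' j, γ ^ j * g j + 16 / 3 * exp (-(4 * L)) * W / (1 - γ) := by
        field_simp

lemma exp_neg_four_mul_log_le {S T δ : ℝ} (hS : 1 ≤ S) (hT : 0 < T) (hδ0 : 0 < δ)
    (hδ1 : δ ≤ 1) : exp (-(4 * log (S * T / δ))) ≤ δ / (S * T ^ 4) := by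
  have hS0 : 0 < S := zero_lt_one.trans_le hS
  rw [exp_neg, show 4 * log (S * T / δ) = log ((S * T / δ) ^ 4) by rw [log_pow]; norm_num,
    exp_log (by positivity), div_pow, inv_div, div_le_div_iff₀ (by positivity) (by positivity)]
  calc δ ^ 4 * (S * T ^ 4) = δ ^ 3 * (δ * S * T ^ 4) := by ring
    _ ≤ S ^ 3 * (δ * S * T ^ 4) :=
        mul_le_mul_of_nonneg_right ((pow_le_one₀ hδ0.le hδ1).trans (one_le_pow₀ hS))
          (by positivity)
    _ = δ * (S * T) ^ 4 := by ring

/-- There exists an absolute constant `C > 0` such that: for all positive integers `S`, `T`,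
every `δ ∈ (0,1)` with `S·T ≥ e·δ`, every `γ ∈ (0,1)`, with
`H := ⌈(4/(1−γ)) log(S·T/δ)⌉`, for every `S×S` row-stochastic matrix `P`, every probability
row vector `ρ`, and every entrywise nonnegative `V`, the series
`∑_{j=0}^∞ [γ(1+1/H)³]^j ⟨ρP^j, V⟩` converges and is at most
`C·(⟨d, V⟩/(1−γ) + δ‖V‖_∞/(S T⁴ (1−γ)))`, where `d := (1−γ) ∑_{t=0}^∞ γ^t ρP^t`. -/
theorem stmt4 :
    ∃ C : ℝ, 0 < C ∧
      ∀ (S T : ℕ), 0 < S → 0 < T →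
      ∀ δ : ℝ, 0 < δ → δ < 1 → Real.exp 1 * δ ≤ (S : ℝ) * T →
      ∀ γ : ℝ, 0 < γ → γ < 1 →
      ∀ P : Matrix (Fin S) (Fin S) ℝ,
        (∀ s s', 0 ≤ P s s') → (∀ s, ∑ s', P s s' = 1) →
      ∀ ρ : Fin S → ℝ, (∀ s, 0 ≤ ρ s) → (∑ s, ρ s = 1) →
      ∀ V : Fin S → ℝ, (∀ s, 0 ≤ V s) →
      letI H : ℕ := ⌈(4 / (1 - γ)) * Real.log ((S : ℝ) * T / δ)⌉₊
      letI d : Fin S → ℝ := fun s => (1 - γ) * ∑' t : ℕ, γ ^ t * (ρ ᵥ* (P ^ t)) s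
      letI f : ℕ → ℝ :=
        fun j => (γ * (1 + 1 / (H : ℝ)) ^ 3) ^ j * ∑ s, (ρ ᵥ* (P ^ j)) s * V s
      Summable f ∧
        ∑' j, f j ≤ C * ((∑ s, d s * V s) / (1 - γ) +
          δ * (⨆ s, |V s|) / ((S : ℝ) * (T : ℝ) ^ 4 * (1 - γ))) := by
  refine ⟨exp 12, exp_pos 12, ?_⟩
  intro S T hS hT δ hδ0 hδ1 hδST γ hγ0 hγ1 P hP0 hP1 ρ hρ0 hρ1 V hV0
  have hP : P ∈ rowStochastic ℝ (Fin S) := mem_rowStochastic_iff_sum.2 ⟨hP0, hP1⟩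
  have hdist : ∀ t, ρ ᵥ* (P ^ t) ∈ stdSimplex ℝ (Fin S) := fun t =>
    vecMul_mem_stdSimplex (pow_mem hP t) ⟨hρ0, hρ1⟩
  have hg0 : ∀ t, 0 ≤ ∑ s, (ρ ᵥ* (P ^ t)) s * V s := fun t =>
    sum_nonneg fun s _ => mul_nonneg ((hdist t).1 s) (hV0 s)
  have hgW : ∀ t, ∑ s, (ρ ᵥ* (P ^ t)) s * V s ≤ ⨆ s, |V s| := fun t =>
    dotProduct_le_iSup_abs (hdist t) V
  have hL : 1 ≤ log (S * T / δ) := (le_log_iff_exp_le (by positivity)).2 ((le_div_iff₀ hδ0).2 hδST)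
  obtain ⟨hsum, hle⟩ := tsum_inflated_discount_le hg0 hgW hγ0.le hγ1 hL (Nat.le_ceil _)
  refine ⟨hsum, hle.trans ?_⟩
  have hocc : ∀ s, Summable fun t => γ ^ t * (ρ ᵥ* (P ^ t)) s := fun s =>
    summable_pow_mul_of_bounded hγ0.le hγ1 (fun t => (hdist t).1 s)
      (fun t => (mem_Icc_of_mem_stdSimplex (hdist t) s).2)
  rw [sum_mul_tsum_pow_mul hocc, mul_div_cancel_left₀ _ (by linarith), mul_add]
  refine add_le_add le_rfl ?_
  calc 16 / 3 * exp (-(4 * log (S * T / δ))) * (⨆ s, |V s|) / (1 - γ)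
      ≤ exp 12 * (δ / (S * T ^ 4)) * (⨆ s, |V s|) / (1 - γ) := by
        refine div_le_div_of_nonneg_right (mul_le_mul_of_nonneg_right ?_ ((hg0 0).trans (hgW 0)))
          (by linarith)
        exact mul_le_mul (by linarith [add_one_le_exp 12])
          (exp_neg_four_mul_log_le (by exact_mod_cast hS) (by exact_mod_cast hT) hδ0 hδ1.le)
          (exp_pos _).le (exp_pos _).le
    _ = exp 12 * (δ * (⨆ s, |V s|) / (S * T ^ 4 * (1 - γ))) := by rw [mul_div_mul_comm]; ring
end

section
/- Let γ ∈ (0,1), let P be an S×S row-stochastic matrix, let ρ ∈ ℝ^S be a probability row vector, let d := (1−γ) ∑_{t=0}^{∞} γ^t ρP^t, and set ρ̃ := (d − (1−γ)ρ)/γ. Then entrywise, (1−γ) ∑_{i=0}^{∞} γ^i ρ̃ P^i = ((1−γ)²/γ) ∑_{i=0}^{∞} i γ^i ρ P^i, and both series converge absolutely entrywise. -/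
/-!
Since `ρ̃ = dP`, we get `γ^i ρ̃P^i = (1-γ) ∑_t γ^(i+t) ρP^(i+t+1)`. Summing over `i`, each term
with `i + t = n` occurs `n + 1` times, so the left-hand side is
`(1-γ)² ∑_n (n+1) γ^n ρP^(n+1) = ((1-γ)²/γ) ∑_m m γ^m ρP^m`. All entries of `ρP^k` lie in `[0, 1]`,
so the rearrangement is justified by nonnegativity and the series are dominated by `m γ^m`.
-/

open Matrix Finset

theorem hasSum_comp_add_of_nonneg {c : ℕ → ℝ} (hc : ∀ n, 0 ≤ c n) {a : ℝ}
    (h : HasSum (fun n : ℕ => ((n : ℝ) + 1) * c n) a) :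
    HasSum (fun p : ℕ × ℕ => c (p.1 + p.2)) a := by
  rw [← HasAntidiagonal.sigmaAntidiagonalEquivProd.hasSum_iff]
  have hfiber : ∀ n : ℕ, HasSum (fun p : antidiagonal n => c ((p : ℕ × ℕ).1 + (p : ℕ × ℕ).2))
      (((n : ℝ) + 1) * c n) := by
    intro n
    convert hasSum_fintype _ using 1
    rw [Finset.sum_coe_sort (antidiagonal n) (fun p => c (p.1 + p.2)),
      Finset.sum_congr rfl fun p hp => by rw [mem_antidiagonal.mp hp]]
    simp
  refine h.sigma_of_hasSum hfiber ((summable_sigma_of_nonneg fun _ => hc _).mpr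
    ⟨fun n => (hfiber n).summable, ?_⟩)
  exact h.summable.congr fun n => (hfiber n).tsum_eq.symm

theorem hasSum_pow_mul_tsum_pow_mul_add {γ : ℝ} (hγ : 0 < γ) {a : ℕ → ℝ} (ha : ∀ n, 0 ≤ a n)
    {B : ℝ} (hB : HasSum (fun n : ℕ => (n : ℝ) * γ ^ n * a n) B) :
    HasSum (fun i => γ ^ i * ∑' t, γ ^ t * a (i + t + 1)) (B / γ) := by
  set c : ℕ → ℝ := fun n => γ ^ n * a (n + 1)
  have hc : HasSum (fun n : ℕ => ((n : ℝ) + 1) * c n) (B / γ) := by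
    have hshift : HasSum (fun n : ℕ => ((n : ℝ) + 1) * γ ^ (n + 1) * a (n + 1)) B := by
      simpa using (hasSum_nat_add_iff' 1).mpr hB
    refine (hshift.div_const γ).congr_fun fun n => ?_
    simp only [c]
    field_simp
    ring
  have hprod := hasSum_comp_add_of_nonneg (fun n => mul_nonneg (pow_nonneg hγ.le n) (ha _)) hc
  convert hprod.prod_fiberwise fun i => (hprod.summable.prod_factor i).hasSum using 2 with i
  rw [← tsum_mul_left]
  congr 1 with t
  simp only [pow_add]
  ring

theorem summable_abs_pow_mul_geometric_mul_of_abs_le {γ : ℝ} (hγ0 : 0 ≤ γ) (hγ1 : γ < 1) (k : ℕ)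
    {a : ℕ → ℝ} {C : ℝ} (ha : ∀ n, |a n| ≤ C) :
    Summable fun n : ℕ => |(n : ℝ) ^ k * γ ^ n * a n| := by
  refine Summable.of_nonneg_of_le (fun n => abs_nonneg _) (fun n => ?_)
    ((summable_pow_mul_geometric_of_norm_lt_one k (by rwa [Real.norm_of_nonneg hγ0])).mul_right C)
  rw [abs_mul, abs_of_nonneg (by positivity)]
  exact mul_le_mul_of_nonneg_left (ha n) (by positivity)

theorem tsum_apply_vecMul {R m n ι : Type*} [Fintype m] [Semiring R] [TopologicalSpace R]
    [IsTopologicalSemiring R] [T2Space R] {v : ι → m → R} (hv : ∀ x, Summable fun t => v t x)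
    (M : Matrix m n R) (y : n) :
    ((fun x => ∑' t, v t x) ᵥ* M) y = ∑' t, (v t ᵥ* M) y := by
  simp only [vecMul, dotProduct]
  rw [Summable.tsum_finsetSum fun x _ => (hv x).mul_right (M x y)]
  exact Finset.sum_congr rfl fun x _ => ((hv x).tsum_mul_right _).symm

theorem abs_apply_le_one_of_mem_stdSimplex {n : Type*} [Fintype n] {x : n → ℝ}
    (hx : x ∈ stdSimplex ℝ n) (i : n) : |x i| ≤ 1 := by
  rw [abs_of_nonneg (hx.1 i)]
  exact (mem_Icc_of_mem_stdSimplex hx i).2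

section Markov

variable {n : Type*} [Fintype n] [DecidableEq n] {ρ : n → ℝ} {P : Matrix n n ℝ}

theorem vecMul_mem_stdSimplex (hρ : ρ ∈ stdSimplex ℝ n) (hP : P ∈ rowStochastic ℝ n) :
    ρ ᵥ* P ∈ stdSimplex ℝ n := by
  refine ⟨nonneg_vecMul_of_mem_rowStochastic hP hρ.1, ?_⟩
  simpa [dotProduct] using
    vecMul_dotProduct_one_eq_one_rowStochastic hP (x := ρ) (by simpa [dotProduct] using hρ.2)

noncomputable def discountedOccupancy (γ : ℝ) (ρ : n → ℝ) (P : Matrix n n ℝ) : n → ℝ :=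
  fun s => (1 - γ) * ∑' t : ℕ, γ ^ t * (ρ ᵥ* P ^ t) s

variable {γ : ℝ}

theorem discountedOccupancy_vecMul_pow_apply
    (hs : ∀ x, Summable fun t => γ ^ t * (ρ ᵥ* P ^ t) x) (m : ℕ) (y : n) :
    (discountedOccupancy γ ρ P ᵥ* P ^ m) y = (1 - γ) * ∑' t, γ ^ t * (ρ ᵥ* P ^ (t + m)) y := by
  have hd : discountedOccupancy γ ρ P = (1 - γ) • fun x => ∑' t, (γ ^ t • ρ ᵥ* P ^ t) x := rfl
  rw [hd, smul_vecMul, Pi.smul_apply, smul_eq_mul,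
    tsum_apply_vecMul (v := fun t => γ ^ t • ρ ᵥ* P ^ t) hs]
  simp only [smul_vecMul, vecMul_vecMul, ← pow_add, Pi.smul_apply, smul_eq_mul]

theorem discountedOccupancy_sub_div_eq_vecMul (hγ : γ ≠ 0)
    (hs : ∀ x, Summable fun t => γ ^ t * (ρ ᵥ* P ^ t) x) :
    (fun x => (discountedOccupancy γ ρ P x - (1 - γ) * ρ x) / γ) =
      discountedOccupancy γ ρ P ᵥ* P := by
  funext x
  have hdP := discountedOccupancy_vecMul_pow_apply hs 1 x
  rw [pow_one] at hdP
  rw [hdP, discountedOccupancy, (hs x).tsum_eq_zero_add]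
  simp only [pow_zero, vecMul_one, one_mul, pow_succ', mul_assoc, tsum_mul_left]
  field_simp
  ring

end Markov

/-- Let `γ ∈ (0,1)`, `P` an `S×S` row-stochastic matrix, `ρ` a probability row vector,
`d := (1−γ) ∑_{t=0}^∞ γ^t ρP^t`, and `ρ̃ := (d − (1−γ)ρ)/γ`.  Then entrywise
`(1−γ) ∑_{i=0}^∞ γ^i ρ̃P^i = ((1−γ)²/γ) ∑_{i=0}^∞ i γ^i ρP^i`, both series converging
absolutely entrywise. -/
theorem stmt7 (S : ℕ) (γ : ℝ) (hγ0 : 0 < γ) (hγ1 : γ < 1)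
    (P : Matrix (Fin S) (Fin S) ℝ)
    (hP0 : ∀ s s', 0 ≤ P s s') (hP1 : ∀ s, ∑ s', P s s' = 1)
    (ρ : Fin S → ℝ) (hρ0 : ∀ s, 0 ≤ ρ s) (hρ1 : ∑ s, ρ s = 1) :
    letI d : Fin S → ℝ := fun s => (1 - γ) * ∑' t : ℕ, γ ^ t * (ρ ᵥ* (P ^ t)) s
    letI ρt : Fin S → ℝ := fun s => (d s - (1 - γ) * ρ s) / γ
    ∀ s : Fin S,
      (Summable fun i : ℕ => |γ ^ i * (ρt ᵥ* (P ^ i)) s|) ∧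
      (Summable fun i : ℕ => |(i : ℝ) * γ ^ i * (ρ ᵥ* (P ^ i)) s|) ∧
      (1 - γ) * (∑' i : ℕ, γ ^ i * (ρt ᵥ* (P ^ i)) s) =
        ((1 - γ) ^ 2 / γ) * ∑' i : ℕ, (i : ℝ) * γ ^ i * (ρ ᵥ* (P ^ i)) s := by
  intro s
  set ρt : Fin S → ℝ := fun x => ((1 - γ) * ∑' t, γ ^ t * (ρ ᵥ* P ^ t) x - (1 - γ) * ρ x) / γ
  have hq (k : ℕ) : ρ ᵥ* P ^ k ∈ stdSimplex ℝ (Fin S) :=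
    vecMul_mem_stdSimplex ⟨hρ0, hρ1⟩ (pow_mem (mem_rowStochastic_iff_sum.mpr ⟨hP0, hP1⟩) k)
  have hbound (x : Fin S) (k : ℕ) := abs_apply_le_one_of_mem_stdSimplex (hq k) x
  have hs : ∀ x, Summable fun t => γ ^ t * (ρ ᵥ* P ^ t) x := fun x => by
    simpa using (summable_abs_pow_mul_geometric_mul_of_abs_le hγ0.le hγ1 0 (hbound x)).of_abs
  have hρtP : ∀ i, γ ^ i * (ρt ᵥ* P ^ i) s =
      (1 - γ) * (γ ^ i * ∑' t, γ ^ t * (ρ ᵥ* P ^ (i + t + 1)) s) := by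
    intro i
    rw [show ρt = _ from discountedOccupancy_sub_div_eq_vecMul hγ0.ne' hs, vecMul_vecMul,
      ← pow_succ', discountedOccupancy_vecMul_pow_apply hs]
    simp_rw [show ∀ t, t + (i + 1) = i + t + 1 by omega]
    ring
  have hmoment := summable_abs_pow_mul_geometric_mul_of_abs_le hγ0.le hγ1 1 (hbound s)
  simp only [pow_one] at hmoment
  have hsum := (hasSum_pow_mul_tsum_pow_mul_add hγ0 (fun k => (hq k).1 s)
    hmoment.of_abs.hasSum).mul_left (1 - γ)
  simp only [← hρtP] at hsum
  refine ⟨hsum.summable.abs, hmoment, ?_⟩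
  rw [hsum.tsum_eq]
  ring
end

section
/- Let γ ∈ (0,1), let P be an S×S row-stochastic matrix, let r ∈ ℝ^S satisfy 0 ≤ r_s ≤ 1 for all s, and let V ∈ ℝ^S be the unique solution of V = r + γPV. Define v ∈ ℝ^S by v_s := (P(V∘V))_s − ((PV)_s)². Then entrywise, v ≤ (1/γ²)(γ²P − I)(V∘V) + (2/γ²) V∘r. -/
open Matrix

/-
Substituting `γ PV = V - r` turns `γ² v = γ² P(V∘V) - (γ PV)²` into
`(γ²P - I)(V∘V) + 2 V∘r - r∘r`, and `r∘r ≥ 0`.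
-/

section Identity

variable {n R : Type*} [Fintype n] [DecidableEq n] [CommRing R]

lemma sq_smul_sub_one_mulVec_mul_self_apply (γ : R) (P : Matrix n n R) (V : n → R) (s : n) :
    ((γ ^ 2 • P - 1) *ᵥ (V * V)) s = γ ^ 2 * (P *ᵥ (V * V)) s - V s ^ 2 := by
  rw [sub_mulVec, smul_mulVec, one_mulVec, Pi.sub_apply, Pi.smul_apply, Pi.mul_apply, smul_eq_mul,
    sq (V s)]

lemma sq_mul_variance_eq_of_bellman {γ : R} {P : Matrix n n R} {r V : n → R}
    (hV : ∀ s, V s = r s + γ * (P *ᵥ V) s) (s : n) :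
    γ ^ 2 * ((P *ᵥ (V * V)) s - (P *ᵥ V) s ^ 2)
      = ((γ ^ 2 • P - 1) *ᵥ (V * V)) s + 2 * (V s * r s) - r s ^ 2 := by
  have hPV : γ * (P *ᵥ V) s = V s - r s := by rw [hV s]; ring
  rw [sq_smul_sub_one_mulVec_mul_self_apply, mul_sub, ← mul_pow, hPV]
  ring

end Identity

theorem stmt13_general (S : ℕ) (γ : ℝ) (hγ0 : 0 < γ)
    (P : Matrix (Fin S) (Fin S) ℝ)
    (r : Fin S → ℝ)
    (V : Fin S → ℝ) (hV : ∀ s, V s = r s + γ * (P *ᵥ V) s) :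
    letI v : Fin S → ℝ := fun s => (P *ᵥ (V * V)) s - ((P *ᵥ V) s) ^ 2
    ∀ s : Fin S,
      v s ≤ (1 / γ ^ 2) * (((γ ^ 2 • P - 1) *ᵥ (V * V)) s) + (2 / γ ^ 2) * (V s * r s) := by
  intro s
  have hγ2 : 0 < γ ^ 2 := by positivity
  have hscaled : γ ^ 2 * ((P *ᵥ (V * V)) s - (P *ᵥ V) s ^ 2)
      ≤ ((γ ^ 2 • P - 1) *ᵥ (V * V)) s + 2 * (V s * r s) := by
    rw [sq_mul_variance_eq_of_bellman hV s]
    linarith [sq_nonneg (r s)]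
  show (P *ᵥ (V * V)) s - (P *ᵥ V) s ^ 2 ≤ _
  rw [one_div_mul_eq_div, div_mul_eq_mul_div, ← add_div, le_div_iff₀ hγ2, mul_comm]
  exact hscaled

/-- Let `γ ∈ (0,1)`, `P` an `S×S` row-stochastic matrix, `r ∈ [0,1]^S`, and `V` the unique
solution of `V = r + γPV`.  With `v_s := (P(V∘V))_s − ((PV)_s)²`, entrywise
`v ≤ (1/γ²)(γ²P − I)(V∘V) + (2/γ²) V∘r`. -/
theorem stmt13 (S : ℕ) (γ : ℝ) (hγ0 : 0 < γ) (hγ1 : γ < 1)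
    (P : Matrix (Fin S) (Fin S) ℝ)
    (hP0 : ∀ s s', 0 ≤ P s s') (hP1 : ∀ s, ∑ s', P s s' = 1)
    (r : Fin S → ℝ) (hr : ∀ s, 0 ≤ r s ∧ r s ≤ 1)
    (V : Fin S → ℝ) (hV : ∀ s, V s = r s + γ * (P *ᵥ V) s) :
    letI v : Fin S → ℝ := fun s => (P *ᵥ (V * V)) s - ((P *ᵥ V) s) ^ 2
    ∀ s : Fin S,
      v s ≤ (1 / γ ^ 2) * (((γ ^ 2 • P - 1) *ᵥ (V * V)) s) + (2 / γ ^ 2) * (V s * r s) :=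
  stmt13_general S γ hγ0 P r V hV
end

section
/- Let P be an S×S row-stochastic matrix with rows P_s, let d ∈ ℝ^S have nonnegative entries, and let W, V ∈ ℝ^S satisfy 0 ≤ W ≤ V entrywise. Then ∑_s d_s [Var_{P_s}(W) − Var_{P_s}(V)] ≤ 2 ‖V‖_∞ ∑_s d_s (P(V−W))_s. -/
open Matrix

/-- The variance `Var_p(U) := ∑_s p_s U_s² − (∑_s p_s U_s)²` of a vector `U` under a
probability vector `p`. -/
noncomputable def varVec {S : ℕ} (p U : Fin S → ℝ) : ℝ :=
  (∑ s, p s * U s ^ 2) - (∑ s, p s * U s) ^ 2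

section VarianceComparison

variable {S : ℕ} {p W V : Fin S → ℝ}

lemma dotProduct_mono_of_nonneg (hp : ∀ i, 0 ≤ p i) (hWV : ∀ i, W i ≤ V i) :
    p ⬝ᵥ W ≤ p ⬝ᵥ V :=
  Finset.sum_le_sum fun i _ => mul_le_mul_of_nonneg_left (hWV i) (hp i)

lemma dotProduct_le_of_le_const (hp : ∀ i, 0 ≤ p i) (hp1 : ∑ i, p i = 1) {M : ℝ}
    (hVM : ∀ i, V i ≤ M) : p ⬝ᵥ V ≤ M :=
  calc p ⬝ᵥ V ≤ p ⬝ᵥ fun _ => M := dotProduct_mono_of_nonneg hp hVM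
    _ = M := by simp only [dotProduct, ← Finset.sum_mul, hp1, one_mul]

/-- For `0 ≤ W ≤ V ≤ M` the second moments are ordered the same way, so only the squared
means contribute, and `b² - a² = (b - a)(b + a) ≤ 2M (b - a)` for the means `a ≤ b ≤ M`. -/
lemma varVec_sub_varVec_le (hp : ∀ i, 0 ≤ p i) (hp1 : ∑ i, p i = 1)
    (hW0 : ∀ i, 0 ≤ W i) (hWV : ∀ i, W i ≤ V i) {M : ℝ} (hVM : ∀ i, V i ≤ M) :
    varVec p W - varVec p V ≤ 2 * M * (p ⬝ᵥ (V - W)) := by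
  have hsq : p ⬝ᵥ (W ^ 2) ≤ p ⬝ᵥ (V ^ 2) :=
    dotProduct_mono_of_nonneg hp fun i => pow_le_pow_left₀ (hW0 i) (hWV i) 2
  have hab : p ⬝ᵥ W ≤ p ⬝ᵥ V := dotProduct_mono_of_nonneg hp hWV
  have hbM : p ⬝ᵥ V ≤ M := dotProduct_le_of_le_const hp hp1 hVM
  have hvar : ∀ U, varVec p U = p ⬝ᵥ (U ^ 2) - (p ⬝ᵥ U) ^ 2 := fun U => rfl
  rw [hvar, hvar, dotProduct_sub]
  nlinarith

end VarianceComparison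

theorem stmt14_general (S : ℕ)
    (P : Matrix (Fin S) (Fin S) ℝ)
    (hP0 : ∀ s s', 0 ≤ P s s') (hP1 : ∀ s, ∑ s', P s s' = 1)
    (d : Fin S → ℝ) (hd : ∀ s, 0 ≤ d s)
    (W V : Fin S → ℝ) (hW0 : ∀ s, 0 ≤ W s) (hWV : ∀ s, W s ≤ V s) :
    (∑ s, d s * (varVec (P s) W - varVec (P s) V)) ≤
      2 * (⨆ s, |V s|) * ∑ s, d s * (P *ᵥ (V - W)) s := by
  set M := ⨆ s, |V s|
  have hVM : ∀ s, V s ≤ M := fun s =>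
    (le_abs_self _).trans (le_ciSup (f := fun s => |V s|) (Set.finite_range _).bddAbove s)
  calc ∑ s, d s * (varVec (P s) W - varVec (P s) V)
      ≤ ∑ s, d s * (2 * M * (P *ᵥ (V - W)) s) :=
        Finset.sum_le_sum fun s _ => mul_le_mul_of_nonneg_left
          (varVec_sub_varVec_le (hP0 s) (hP1 s) hW0 hWV hVM) (hd s)
    _ = 2 * M * ∑ s, d s * (P *ᵥ (V - W)) s := by
        rw [Finset.mul_sum]
        exact Finset.sum_congr rfl fun s _ => mul_left_comm _ _ _

/-- Let `P` be an `S×S` row-stochastic matrix with rows `P_s`, let `d` have nonnegative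
entries, and let `0 ≤ W ≤ V` entrywise.  Then
`∑_s d_s [Var_{P_s}(W) − Var_{P_s}(V)] ≤ 2‖V‖_∞ ∑_s d_s (P(V−W))_s`. -/
theorem stmt14 (S : ℕ) (hS : 0 < S)
    (P : Matrix (Fin S) (Fin S) ℝ)
    (hP0 : ∀ s s', 0 ≤ P s s') (hP1 : ∀ s, ∑ s', P s s' = 1)
    (d : Fin S → ℝ) (hd : ∀ s, 0 ≤ d s)
    (W V : Fin S → ℝ) (hW0 : ∀ s, 0 ≤ W s) (hWV : ∀ s, W s ≤ V s) :
    (∑ s, d s * (varVec (P s) W - varVec (P s) V)) ≤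
      2 * (⨆ s, |V s|) * ∑ s, d s * (P *ᵥ (V - W)) s :=
  stmt14_general S P hP0 hP1 d hd W V hW0 hWV
end

section
/- Let j ≥ 1 be an integer, and let Δ_0, Δ_1, …, Δ_j, α_1, …, α_j, β_1, …, β_j be nonnegative reals satisfying Δ_k ≤ α_k √(Δ_{k−1}) + β_k for every 1 ≤ k ≤ j. Then Δ_j ≤ ∑_{i=1}^{j} ( ∏_{m=i+1}^{j} α_m^{1/2^{j−m}} ) β_i^{1/2^{j−i}} + ( ∏_{m=1}^{j} α_m^{1/2^{j−m}} ) Δ_0^{1/2^{j}}. -/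
/-!
Induction on `j`. The square root is subadditive, multiplicative on nonnegative reals, and halves
the exponent `1 / 2 ^ k`; so the square root of the bound for `Δ_j` is at most the same expression
with every root taken once more. Multiplying by `α_{j+1}` and adding `β_{j+1}` turns this
expression into the bound for `Δ_{j+1}`.
-/

open Finset Real

namespace Real

theorem sqrt_add_le_add_sqrt (x y : ℝ) : √(x + y) ≤ √x + √y := by
  rcases lt_or_ge x 0 with hx | hx
  · rw [sqrt_eq_zero_of_nonpos hx.le, zero_add]
    exact sqrt_le_sqrt (by linarith)
  rcases lt_or_ge y 0 with hy | hy
  · rw [sqrt_eq_zero_of_nonpos hy.le, add_zero]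
    exact sqrt_le_sqrt (by linarith)
  rw [sqrt_le_left (by positivity)]
  nlinarith [sq_sqrt hx, sq_sqrt hy, sqrt_nonneg x, sqrt_nonneg y]

theorem sqrt_sum_le_sum_sqrt {ι : Type*} (s : Finset ι) (f : ι → ℝ) :
    √(∑ i ∈ s, f i) ≤ ∑ i ∈ s, √(f i) :=
  le_sum_of_subadditive _ sqrt_zero.le sqrt_add_le_add_sqrt s f

theorem sqrt_rpow_one_div_two_pow {x : ℝ} (hx : 0 ≤ x) (n : ℕ) :
    √(x ^ ((1 : ℝ) / 2 ^ n)) = x ^ ((1 : ℝ) / 2 ^ (n + 1)) := by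
  rw [sqrt_eq_rpow, ← rpow_mul hx, pow_succ]
  ring_nf

theorem sqrt_prod_rpow_mul_rpow {ι : Type*} (s : Finset ι) {f : ι → ℝ} (hf : ∀ i ∈ s, 0 ≤ f i)
    (e : ι → ℕ) {x : ℝ} (hx : 0 ≤ x) (k : ℕ) :
    √((∏ i ∈ s, f i ^ ((1 : ℝ) / 2 ^ e i)) * x ^ ((1 : ℝ) / 2 ^ k)) =
      (∏ i ∈ s, f i ^ ((1 : ℝ) / 2 ^ (e i + 1))) * x ^ ((1 : ℝ) / 2 ^ (k + 1)) := by
  rw [sqrt_mul (prod_nonneg fun i hi => rpow_nonneg (hf i hi) _),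
    sqrt_prod _ fun i hi => rpow_nonneg (hf i hi) _, sqrt_rpow_one_div_two_pow hx]
  congr 1
  exact prod_congr rfl fun i hi => sqrt_rpow_one_div_two_pow (hf i hi) _

end Real

/-- The bound for `Δ_j` with every root taken `n` more times; `n = 0` is the bound itself. -/
noncomputable def rootBound (α β : ℕ → ℝ) (D : ℝ) (j n : ℕ) : ℝ :=
  (∑ i ∈ Icc 1 j,
      (∏ m ∈ Icc (i + 1) j, α m ^ ((1 : ℝ) / 2 ^ (j - m + n))) * β i ^ ((1 : ℝ) / 2 ^ (j - i + n)))
    + (∏ m ∈ Icc 1 j, α m ^ ((1 : ℝ) / 2 ^ (j - m + n))) * D ^ ((1 : ℝ) / 2 ^ (j + n))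

theorem rootBound_succ (α β : ℕ → ℝ) (D : ℝ) (j n : ℕ) :
    rootBound α β D (j + 1) n =
      α (j + 1) ^ ((1 : ℝ) / 2 ^ n) * rootBound α β D j (n + 1) + β (j + 1) ^ ((1 : ℝ) / 2 ^ n) := by
  have hexp : ∀ m ≤ j, j + 1 - m + n = j - m + (n + 1) := fun m hm => by omega
  have hprod : ∀ a ≤ j + 1, ∏ m ∈ Icc a (j + 1), α m ^ ((1 : ℝ) / 2 ^ (j + 1 - m + n)) =
      α (j + 1) ^ ((1 : ℝ) / 2 ^ n) * ∏ m ∈ Icc a j, α m ^ ((1 : ℝ) / 2 ^ (j - m + (n + 1))) := by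
    intro a ha
    rw [prod_Icc_succ_top ha, mul_comm, Nat.sub_self, zero_add]
    congr 1
    exact prod_congr rfl fun m hm => by rw [hexp m (mem_Icc.mp hm).2]
  have hsum : ∑ i ∈ Icc 1 j, (∏ m ∈ Icc (i + 1) (j + 1), α m ^ ((1 : ℝ) / 2 ^ (j + 1 - m + n))) *
        β i ^ ((1 : ℝ) / 2 ^ (j + 1 - i + n)) =
      ∑ i ∈ Icc 1 j, α (j + 1) ^ ((1 : ℝ) / 2 ^ n) *
        ((∏ m ∈ Icc (i + 1) j, α m ^ ((1 : ℝ) / 2 ^ (j - m + (n + 1)))) *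
          β i ^ ((1 : ℝ) / 2 ^ (j - i + (n + 1)))) := by
    refine sum_congr rfl fun i hi => ?_
    rw [hprod (i + 1) (by grind), hexp i (mem_Icc.mp hi).2, mul_assoc]
  rw [rootBound, rootBound, sum_Icc_succ_top (by omega), hsum, hprod 1 (by omega), mul_add,
    mul_sum, Icc_eq_empty (by omega : ¬ j + 1 + 1 ≤ j + 1), prod_empty, one_mul, Nat.sub_self,
    zero_add, show j + 1 + n = j + (n + 1) by omega]
  ring

theorem sqrt_rootBound_le {α β : ℕ → ℝ} {D : ℝ} {j : ℕ} (hα : ∀ m ∈ Icc 1 j, 0 ≤ α m)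
    (hβ : ∀ i ∈ Icc 1 j, 0 ≤ β i) (hD : 0 ≤ D) (n : ℕ) :
    √(rootBound α β D j n) ≤ rootBound α β D j (n + 1) := by
  have hα' : ∀ i ∈ Icc 1 j, ∀ m ∈ Icc (i + 1) j, 0 ≤ α m := fun i hi m hm =>
    hα m (Icc_subset_Icc_left (by grind) hm)
  calc √(rootBound α β D j n)
      ≤ (∑ i ∈ Icc 1 j, √((∏ m ∈ Icc (i + 1) j, α m ^ ((1 : ℝ) / 2 ^ (j - m + n))) *
            β i ^ ((1 : ℝ) / 2 ^ (j - i + n))))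
        + √((∏ m ∈ Icc 1 j, α m ^ ((1 : ℝ) / 2 ^ (j - m + n))) * D ^ ((1 : ℝ) / 2 ^ (j + n))) :=
        (sqrt_add_le_add_sqrt _ _).trans (add_le_add_left (sqrt_sum_le_sum_sqrt _ _) _)
    _ = rootBound α β D j (n + 1) := by
        rw [rootBound, sqrt_prod_rpow_mul_rpow _ hα _ hD]
        congr 1
        exact sum_congr rfl fun i hi => sqrt_prod_rpow_mul_rpow _ (hα' i hi) _ (hβ i hi) _

theorem stmt16_general (j : ℕ) (Δ α β : ℕ → ℝ)
    (hΔ : ∀ k, k ≤ j → 0 ≤ Δ k)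
    (hα : ∀ k, 1 ≤ k → k ≤ j → 0 ≤ α k)
    (hβ : ∀ k, 1 ≤ k → k ≤ j → 0 ≤ β k)
    (hrec : ∀ k, 1 ≤ k → k ≤ j → Δ k ≤ α k * Real.sqrt (Δ (k - 1)) + β k) :
    Δ j ≤ (∑ i ∈ Finset.Icc 1 j,
        (∏ m ∈ Finset.Icc (i + 1) j, (α m) ^ ((1 : ℝ) / 2 ^ (j - m))) *
          (β i) ^ ((1 : ℝ) / 2 ^ (j - i)))
      + (∏ m ∈ Finset.Icc 1 j, (α m) ^ ((1 : ℝ) / 2 ^ (j - m))) *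
          (Δ 0) ^ ((1 : ℝ) / 2 ^ j) := by
  change Δ j ≤ rootBound α β (Δ 0) j 0
  induction j with
  | zero => simp [rootBound]
  | succ j ih =>
    have hΔj : Δ j ≤ rootBound α β (Δ 0) j 0 :=
      ih (fun k hk => hΔ k (by omega)) (fun k h1 h2 => hα k h1 (by omega))
        (fun k h1 h2 => hβ k h1 (by omega)) (fun k h1 h2 => hrec k h1 (by omega))
    have hsqrt : √(Δ j) ≤ rootBound α β (Δ 0) j 1 :=
      (sqrt_le_sqrt hΔj).trans <| sqrt_rootBound_le (fun m hm => hα m (mem_Icc.mp hm).1 (by grind))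
        (fun i hi => hβ i (mem_Icc.mp hi).1 (by grind)) (hΔ 0 (by omega)) 0
    calc Δ (j + 1) ≤ α (j + 1) * √(Δ j) + β (j + 1) := hrec (j + 1) (by omega) le_rfl
      _ ≤ α (j + 1) * rootBound α β (Δ 0) j 1 + β (j + 1) := by
        gcongr
        exact hα (j + 1) (by omega) le_rfl
      _ = rootBound α β (Δ 0) (j + 1) 0 := by simp [rootBound_succ]

/-- Let `j ≥ 1` and let `Δ_0,…,Δ_j, α_1,…,α_j, β_1,…,β_j` be nonnegative reals satisfying
`Δ_k ≤ α_k √(Δ_{k−1}) + β_k` for every `1 ≤ k ≤ j`.  Then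
`Δ_j ≤ ∑_{i=1}^j (∏_{m=i+1}^j α_m^{1/2^{j−m}}) β_i^{1/2^{j−i}}
      + (∏_{m=1}^j α_m^{1/2^{j−m}}) Δ_0^{1/2^j}`
(here `x^{1/2^k}` is the `(2^k)`-th root and an empty product equals `1`). -/
theorem stmt16 (j : ℕ) (hj : 1 ≤ j) (Δ α β : ℕ → ℝ)
    (hΔ : ∀ k, k ≤ j → 0 ≤ Δ k)
    (hα : ∀ k, 1 ≤ k → k ≤ j → 0 ≤ α k)
    (hβ : ∀ k, 1 ≤ k → k ≤ j → 0 ≤ β k)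
    (hrec : ∀ k, 1 ≤ k → k ≤ j → Δ k ≤ α k * Real.sqrt (Δ (k - 1)) + β k) :
    Δ j ≤ (∑ i ∈ Finset.Icc 1 j,
        (∏ m ∈ Finset.Icc (i + 1) j, (α m) ^ ((1 : ℝ) / 2 ^ (j - m))) *
          (β i) ^ ((1 : ℝ) / 2 ^ (j - i)))
      + (∏ m ∈ Finset.Icc 1 j, (α m) ^ ((1 : ℝ) / 2 ^ (j - m))) *
          (Δ 0) ^ ((1 : ℝ) / 2 ^ j) :=
  stmt16_general j Δ α β hΔ hα hβ hrec
end
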